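/- arXiv:2009.13173 — 4 statements merged into one kernel-verified Lean document; each statement's English description precedes it below -/
import Mathlib

section
/- Let F be a field of characteristic different from 2, let V be a finite-dimensional F-vector space equipped with a non-degenerate quadratic form q (with associated symmetric bilinear form ⟨-,-⟩), and let G be a finite group acting linearly on V by isometries of q, with the order of G invertible in F. Then for any two G-fixed vectors x, y ∈ V^G with ⟨x,x⟩ = ⟨y,y⟩ ≠ 0, there exists an F-linear automorphism φ of V that preserves the quadratic form, commutes with the action of every element of G, and satisfies φ(x) = y. -/
open QuadraticMap

/-- Reflection along an anisotropic vector: existence, defining formula, and isometry. -/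
lemma exists_reflection_aux {F V : Type*} [Field F] [AddCommGroup V] [Module F V]
    (Q : QuadraticForm F V) (z : V) (hz : Q z ≠ 0) :
    ∃ φ : V ≃ₗ[F] V,
      (∀ v, φ v = v - ((Q z)⁻¹ * polar Q v z) • z) ∧ (∀ v, Q (φ v) = Q v) := by
  have key : ∀ a b : V, Q (a + b) = Q a + Q b + polar Q a b := by
    intro a b; rw [polar]; ring
  have hzz : polar Q z z = 2 * Q z := by
    rw [polar_self, two_nsmul, two_mul]
  set f : V →ₗ[F] V :=
    LinearMap.id - (LinearMap.toSpanSingleton F V z).comp ((Q z)⁻¹ • (Q.polarBilin.flip z))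
    with hf
  have hfv : ∀ v, f v = v - ((Q z)⁻¹ * polar Q v z) • z := by
    intro v
    simp only [hf, LinearMap.sub_apply, LinearMap.id_apply, LinearMap.comp_apply,
      LinearMap.smul_apply, LinearMap.flip_apply, polarBilin_apply_apply,
      LinearMap.toSpanSingleton_apply, smul_eq_mul]
  have hinv : Function.Involutive f := by
    intro v
    have hb : polar Q (v - ((Q z)⁻¹ * polar Q v z) • z) z = -polar Q v z := by
      rw [polar_sub_left, polar_smul_left, smul_eq_mul, hzz]
      field_simp; ring
    rw [hfv, hfv v, hb, mul_neg, neg_smul, sub_neg_eq_add, sub_add_cancel]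
  refine ⟨LinearEquiv.ofInvolutive f hinv, fun v => by simp [hfv], fun v => ?_⟩
  have : (LinearEquiv.ofInvolutive f hinv) v = v + (-((Q z)⁻¹ * polar Q v z)) • z := by
    simp [hfv, sub_eq_add_neg, neg_smul]
  rw [this, key, QuadraticMap.map_smul, polar_smul_right, smul_eq_mul, smul_eq_mul]
  field_simp
  ring

/-- **Equivariant Witt, Lemma A.1(2).** Let `F` be a field of characteristic `≠ 2`, `V` a
finite-dimensional `F`-vector space with a non-degenerate quadratic form `Q` (with associated
symmetric bilinear form `polarBilin Q`), and `G` a finite group acting `F`-linearly on `V` by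
isometries of `Q`, with `|G|` invertible in `F`. Then for any `G`-fixed vectors `x, y ∈ V^G` with
`⟨x,x⟩ = ⟨y,y⟩ ≠ 0`, there is a `G`-equivariant isometry of `V` sending `x` to `y`. -/
theorem exists_equivariant_isometry_of_fixed_vectors
    {F V G : Type*} [Field F] [AddCommGroup V] [Module F V] [FiniteDimensional F V]
    [Group G] [Fintype G]
    (hchar : ringChar F ≠ 2)
    (hcard : (Fintype.card G : F) ≠ 0)
    (Q : QuadraticForm F V)
    (ρ : Representation F G V)
    (hisom : ∀ (g : G) (v : V), Q (ρ g v) = Q v)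
    (hnd : ∀ x : V, (∀ y : V, Q.polarBilin x y = 0) → x = 0)
    (x y : V)
    (hx : ∀ g : G, ρ g x = x) (hy : ∀ g : G, ρ g y = y)
    (hxy : Q.polarBilin x x = Q.polarBilin y y)
    (hne : Q.polarBilin x x ≠ 0) :
    ∃ φ : V ≃ₗ[F] V,
      (∀ v : V, Q (φ v) = Q v) ∧
      (∀ (g : G) (v : V), φ (ρ g v) = ρ g (φ v)) ∧
      φ x = y := by
  have h2 : (2 : F) ≠ 0 := Ring.two_ne_zero hchar
  have key : ∀ a b : V, Q (a + b) = Q a + Q b + polar Q a b := by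
    intro a b; rw [polar]; ring
  have hpolar : ∀ (g : G) (u v : V), polar Q (ρ g u) (ρ g v) = polar Q u v := by
    intro g u v
    rw [polar, polar, ← map_add, hisom, hisom, hisom]
  have hxx : polar Q x x = 2 * Q x := by rw [polar_self, two_nsmul, two_mul]
  have hyy : polar Q y y = 2 * Q y := by rw [polar_self, two_nsmul, two_mul]
  have hxy' : polar Q x x = polar Q y y := hxy
  have hQxy : Q x + Q y = polar Q x x := by
    apply mul_left_cancel₀ h2
    rw [mul_add, ← hxx, ← hyy, ← hxy']
    ring
  have hsum : Q (x - y) + Q (x + y) = 2 * polar Q x x := by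
    have h1 : Q (x - y) = Q x + Q y - polar Q x y := by
      rw [sub_eq_add_neg, key, polar_neg_right, QuadraticMap.map_neg (Q := Q)]; ring
    rw [h1, key, hQxy]; ring
  have hcases : Q (x - y) ≠ 0 ∨ Q (x + y) ≠ 0 := by
    by_contra h
    push_neg at h
    rw [h.1, h.2, zero_add] at hsum
    exact hne (by
      have := hsum.symm
      rcases mul_eq_zero.mp this with h' | h'
      · exact absurd h' h2
      · exact h')
  rcases hcases with hz | hz
  · -- reflection in z = x - y
    set z := x - y with hzdef
    obtain ⟨φ, hform, hQφ⟩ := exists_reflection_aux Q z hz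
    have hgz : ∀ g : G, ρ g z = z := by
      intro g; rw [hzdef, _root_.map_sub, hx, hy]
    have hpxz : polar Q x z = Q z := by
      have hQz : Q z = Q x + Q y - polar Q x y := by
        rw [hzdef, sub_eq_add_neg, key, polar_neg_right, QuadraticMap.map_neg (Q := Q)]; ring
      rw [hzdef, polar_sub_right, hQz, hQxy]
    have hpvz : ∀ (g : G) (v : V), polar Q (ρ g v) z = polar Q v z := by
      intro g v
      have h := hpolar g v z
      rwa [hgz] at h
    refine ⟨φ, hQφ, fun g v => ?_, ?_⟩
    · rw [hform, hform, LinearMap.map_sub, LinearMap.map_smul, hgz, hpvz]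
    · rw [hform, hpxz, inv_mul_cancel₀ hz, one_smul, hzdef, sub_sub_cancel]
  · -- reflection in z = x + y, composed with -1
    set z := x + y with hzdef
    obtain ⟨φ₀, hform, hQφ⟩ := exists_reflection_aux Q z hz
    have hgz : ∀ g : G, ρ g z = z := by
      intro g; rw [hzdef, _root_.map_add, hx, hy]
    have hpxz : polar Q x z = Q z := by
      have hQz : Q z = Q x + Q y + polar Q x y := by rw [hzdef, key]
      rw [hzdef, polar_add_right, hQz, hQxy]
    have hpvz : ∀ (g : G) (v : V), polar Q (ρ g v) z = polar Q v z := by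
      intro g v
      have h := hpolar g v z
      rwa [hgz] at h
    refine ⟨φ₀.trans (LinearEquiv.neg F), fun v => ?_, fun g v => ?_, ?_⟩
    · simp only [LinearEquiv.trans_apply, LinearEquiv.neg_apply, QuadraticMap.map_neg (Q := Q)]
      exact hQφ v
    · simp only [LinearEquiv.trans_apply, LinearEquiv.neg_apply, LinearMap.map_neg]
      congr 1
      rw [hform, hform, LinearMap.map_sub, LinearMap.map_smul, hgz, hpvz]
    · simp only [LinearEquiv.trans_apply, LinearEquiv.neg_apply]
      rw [hform, hpxz, inv_mul_cancel₀ hz, one_smul, hzdef]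
      abel
end

section
/- Let F be a field of characteristic different from 2 and let G be a finite group whose order is invertible in F. Let V₁ and V₂ be finite-dimensional F-vector spaces with non-degenerate quadratic forms, each equipped with an action of G by isometries. Suppose given orthogonal direct sum decompositions V₁ = U₁ ⊕ W₁ and V₂ = U₂ ⊕ W₂ into G-stable subspaces (i.e., U₁ ⊥ W₁ and U₂ ⊥ W₂, each subspace preserved by G), such that: (i) there exists a G-equivariant isometry between V₁ and V₂; (ii) W₁ is contained in the G-fixed subspace V₁^G and W₂ is contained in V₂^G; (iii) the restrictions of the quadratic forms to W₁ and W₂ are non-degenerate; and (iv) W₁ and W₂ are isometric as quadratic spaces. Then there exists a G-equivariant isometry between U₁ (with the restricted form and G-action) and U₂ (with the restricted form and G-action). -/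
/-!
Reflections in `G`-fixed anisotropic vectors commute with the action of `G`, because `G` acts by
isometries. Witt's extension theorem, proved by composing reflections, therefore holds
equivariantly for non-degenerate subspaces of `V₁^G`: an orthogonal basis of `W₁` consists of
fixed vectors, and so do their images in `W₂`, so every reflection that is used is in a fixed
vector. This extends `W₁ ≅ W₂` to a `G`-equivariant isometry `Φ : V₁ ≅ V₂`. As `Wᵢ` is
non-degenerate, `Uᵢ` is its orthogonal complement, hence `Φ` carries `U₁` onto `U₂`.
-/

namespace QuadraticMap

variable {F V : Type*} [Field F] [AddCommGroup V] [Module F V] (Q : QuadraticForm F V)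

lemma polar_map_of_isometric {V' E : Type*} [AddCommGroup V'] [Module F V']
    {Q' : QuadraticForm F V'} [FunLike E V V'] [AddHomClass E V V'] (f : E)
    (hf : ∀ z, Q' (f z) = Q z) (x y : V) : polar Q' (f x) (f y) = polar Q x y := by
  simp only [polar, ← map_add, hf]

lemma polar_self_eq_two_mul (x : V) : polar Q x x = 2 * Q x := by
  rw [polar_self, two_nsmul, two_mul]

lemma inv_smul_polarBilin_apply_self {v : V} (hv : Q v ≠ 0) :
    ((Q v)⁻¹ • Q.polarBilin v) v = 2 := by
  rw [LinearMap.smul_apply, polarBilin_apply_apply, polar_self_eq_two_mul, smul_eq_mul,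
    mul_left_comm, inv_mul_cancel₀ hv, mul_one]

noncomputable def reflection {v : V} (hv : Q v ≠ 0) : Q.IsometryEquiv Q where
  toLinearEquiv := Module.reflection (inv_smul_polarBilin_apply_self Q hv)
  map_app' z := by
    simp only [LinearEquiv.toFun_eq_coe, Module.reflection_apply, LinearMap.smul_apply,
      polarBilin_apply_apply, smul_eq_mul, sub_eq_add_neg, QuadraticMap.map_add, ← neg_smul,
      QuadraticMap.map_smul, polar_smul_right, polar_comm Q z v]
    field_simp
    ring

variable {Q}

lemma reflection_apply {v : V} (hv : Q v ≠ 0) (z : V) :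
    reflection Q hv z = z - ((Q v)⁻¹ * polar Q v z) • v := rfl

lemma reflection_apply_self {v : V} (hv : Q v ≠ 0) : reflection Q hv v = -v :=
  Module.reflection_apply_self (inv_smul_polarBilin_apply_self Q hv)

lemma reflection_apply_of_polar_eq_zero {v z : V} (hv : Q v ≠ 0) (hz : polar Q v z = 0) :
    reflection Q hv z = z := by
  rw [reflection_apply, hz, mul_zero, zero_smul, sub_zero]

lemma reflection_comm {v : V} (hv : Q v ≠ 0) (τ : V →ₗ[F] V) (hτ : ∀ z, Q (τ z) = Q z)
    (hτv : τ v = v) (z : V) : reflection Q hv (τ z) = τ (reflection Q hv z) := by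
  have hpolar : polar Q v (τ z) = polar Q v z := by
    simpa only [hτv] using polar_map_of_isometric Q τ hτ v z
  rw [reflection_apply, reflection_apply, hpolar, map_sub, map_smul, hτv]

lemma map_sub_eq_add_sub_polar (x y : V) : Q (x - y) = Q x + Q y - polar Q x y := by
  rw [sub_eq_add_neg, QuadraticMap.map_add Q x, QuadraticMap.map_neg, polar_neg_right,
    ← sub_eq_add_neg]

lemma reflection_sub_apply {x y : V} (hxy : Q x = Q y) (h : Q (x - y) ≠ 0) :
    reflection Q h x = y := by
  have hpolar : polar Q (x - y) x = Q (x - y) := by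
    rw [polar_sub_left, polar_self_eq_two_mul, polar_comm, map_sub_eq_add_sub_polar, hxy]
    ring
  rw [reflection_apply, hpolar, inv_mul_cancel₀ h, one_smul, sub_sub_cancel]

lemma reflection_add_apply {x y : V} (hxy : Q x = Q y) (h : Q (x + y) ≠ 0) :
    reflection Q h x = -y := by
  have hpolar : polar Q (x + y) x = Q (x + y) := by
    rw [polar_add_left, polar_self_eq_two_mul, polar_comm, QuadraticMap.map_add Q x y, hxy]
    ring
  rw [reflection_apply, hpolar, inv_mul_cancel₀ h, one_smul, sub_add_cancel_left]

section Equivariant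

variable {G : Type*} [Group G]

lemma reflection_comm_of_mem_invariants {ρ : Representation F G V}
    (hρ : ∀ g z, Q (ρ g z) = Q z) {v : V} (hv : Q v ≠ 0) (hvG : v ∈ ρ.invariants) (g : G) (z : V) :
    reflection Q hv (ρ g z) = ρ g (reflection Q hv z) :=
  reflection_comm hv (ρ g) (hρ g) (hvG g) z

theorem exists_equivariant_isometryEquiv_apply_eq (hchar : ringChar F ≠ 2)
    {ρ : Representation F G V} (hρ : ∀ g z, Q (ρ g z) = Q z) {x y : V}
    (hx : x ∈ ρ.invariants) (hy : y ∈ ρ.invariants) (hxy : Q x = Q y) (hx0 : Q x ≠ 0) :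
    ∃ σ : Q.IsometryEquiv Q, (∀ g z, σ (ρ g z) = ρ g (σ z)) ∧ σ x = y ∧
      ∀ z, polar Q x z = 0 → polar Q y z = 0 → σ z = z := by
  have h2 : (2 : F) ≠ 0 := Ring.two_ne_zero hchar
  have hsum : Q (x - y) + Q (x + y) = 2 * (2 * Q x) := by
    rw [map_sub_eq_add_sub_polar, QuadraticMap.map_add Q x y, ← hxy]
    ring
  rcases ne_or_eq (Q (x - y)) 0 with hsub | hsub
  · refine ⟨reflection Q hsub, reflection_comm_of_mem_invariants hρ hsub (sub_mem hx hy),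
      reflection_sub_apply hxy hsub, fun z hxz hyz => ?_⟩
    exact reflection_apply_of_polar_eq_zero hsub (by rw [polar_sub_left, hxz, hyz, sub_zero])
  · have hadd : Q (x + y) ≠ 0 := by
      rw [hsub, zero_add] at hsum
      rw [hsum]
      exact mul_ne_zero h2 (mul_ne_zero h2 hx0)
    have hy0 : Q y ≠ 0 := hxy ▸ hx0
    refine ⟨(reflection Q hadd).trans (reflection Q hy0), fun g z => ?_, ?_, fun z hxz hyz => ?_⟩
    · change reflection Q hy0 (reflection Q hadd (ρ g z)) =
        ρ g (reflection Q hy0 (reflection Q hadd z))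
      rw [reflection_comm_of_mem_invariants hρ hadd (add_mem hx hy),
        reflection_comm_of_mem_invariants hρ hy0 hy]
    · change reflection Q hy0 (reflection Q hadd x) = y
      rw [reflection_add_apply hxy hadd, map_neg, reflection_apply_self, neg_neg]
    · change reflection Q hy0 (reflection Q hadd z) = z
      rw [reflection_apply_of_polar_eq_zero hadd (by rw [polar_add_left, hxz, hyz, add_zero]),
        reflection_apply_of_polar_eq_zero hy0 hyz]

variable {V' : Type*} [AddCommGroup V'] [Module F V'] {Q' : QuadraticForm F V'}
  {ρ : Representation F G V} {ρ' : Representation F G V'}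

theorem exists_equivariant_isometryEquiv_extend_family (hchar : ringChar F ≠ 2)
    (hρ' : ∀ g z, Q' (ρ' g z) = Q' z)
    (e : Q.IsometryEquiv Q') (he : ∀ g z, e (ρ g z) = ρ' g (e z))
    {ι : Type*} [Fintype ι] {w : ι → V} {w' : ι → V'}
    (hw : ∀ i, w i ∈ ρ.invariants) (hw' : ∀ i, w' i ∈ ρ'.invariants)
    (hQ : ∀ i, Q' (w' i) = Q (w i)) (hQ0 : ∀ i, Q (w i) ≠ 0)
    (horth : Pairwise fun i j => polar Q (w i) (w j) = 0)
    (horth' : Pairwise fun i j => polar Q' (w' i) (w' j) = 0) :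
    ∃ Φ : Q.IsometryEquiv Q', (∀ g z, Φ (ρ g z) = ρ' g (Φ z)) ∧ ∀ i, Φ (w i) = w' i := by
  classical
  suffices ∀ s : Finset ι, ∃ Φ : Q.IsometryEquiv Q',
      (∀ g z, Φ (ρ g z) = ρ' g (Φ z)) ∧ ∀ i ∈ s, Φ (w i) = w' i by
    obtain ⟨Φ, hΦ, hΦw⟩ := this Finset.univ
    exact ⟨Φ, hΦ, fun i => hΦw i (Finset.mem_univ i)⟩
  intro s
  induction s using Finset.induction_on with
  | empty => exact ⟨e, he, by simp⟩
  | insert i s hi ih =>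
    obtain ⟨Φ, hΦ, hΦs⟩ := ih
    have hx : Φ (w i) ∈ ρ'.invariants := fun g => by rw [← hΦ, hw i g]
    obtain ⟨σ, hσ, hσi, hσfix⟩ :=
      exists_equivariant_isometryEquiv_apply_eq hchar hρ' hx (hw' i) (by rw [Φ.map_app, hQ])
        (by rw [Φ.map_app]; exact hQ0 i)
    refine ⟨Φ.trans σ, fun g z => ?_, fun j hj => ?_⟩
    · change σ (Φ (ρ g z)) = ρ' g (σ (Φ z))
      rw [hΦ, hσ]
    · change σ (Φ (w j)) = w' j
      rcases Finset.mem_insert.mp hj with rfl | hj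
      · exact hσi
      · have hij : i ≠ j := (ne_of_mem_of_not_mem hj hi).symm
        have hxj : polar Q' (Φ (w i)) (Φ (w j)) = 0 := by
          rw [polar_map_of_isometric Q Φ Φ.map_app]
          exact horth hij
        rw [hΦs j hj] at hxj ⊢
        exact hσfix _ hxj (horth' hij)

theorem exists_equivariant_isometryEquiv_extend [FiniteDimensional F V]
    (hchar : ringChar F ≠ 2) (hρ' : ∀ g z, Q' (ρ' g z) = Q' z)
    (e : Q.IsometryEquiv Q') (he : ∀ g z, e (ρ g z) = ρ' g (e z))
    {T : Submodule F V} (hT : T ≤ ρ.invariants)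
    (hTnd : ∀ x ∈ T, (∀ y ∈ T, Q.polarBilin x y = 0) → x = 0)
    (f : T →ₗ[F] V') (hf : ∀ t, Q' (f t) = Q t) (hf' : ∀ t, f t ∈ ρ'.invariants) :
    ∃ Φ : Q.IsometryEquiv Q', (∀ g z, Φ (ρ g z) = ρ' g (Φ z)) ∧ ∀ t : T, Φ t = f t := by
  have : Invertible (2 : F) := invertibleOfNonzero (Ring.two_ne_zero hchar)
  have hsymm : LinearMap.IsSymm (LinearMap.BilinForm.restrict Q.polarBilin T) :=
    LinearMap.isSymm_def.mpr fun x y => polar_comm Q (x : V) y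
  obtain ⟨b, hb⟩ := LinearMap.BilinForm.exists_orthogonal_basis hsymm
  have hsep : (LinearMap.BilinForm.restrict Q.polarBilin T).SeparatingLeft := fun x hx =>
    Subtype.ext (hTnd x x.2 fun y hy => hx ⟨y, hy⟩)
  have hb0 : ∀ i, Q (b i) ≠ 0 := fun i h =>
    hb.not_isOrtho_basis_self_of_separatingLeft hsep i (by simp [polar_self, h])
  obtain ⟨Φ, hΦ, hΦb⟩ := exists_equivariant_isometryEquiv_extend_family hchar hρ' e he
    (w := fun i => (b i : V)) (w' := fun i => f (b i)) (fun i => hT (b i).2) (fun i => hf' _)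
    (fun i => hf _) hb0 (fun i j hij => hb hij)
    (fun i j hij => (polar_map_of_isometric (Q.comp T.subtype) f hf _ _).trans (hb hij))
  refine ⟨Φ, hΦ, fun t => ?_⟩
  have : (Φ : V →ₗ[F] V') ∘ₗ T.subtype = f := b.ext fun i => hΦb i
  exact LinearMap.congr_fun this t

end Equivariant

section Orthogonal

variable {V' : Type*} [AddCommGroup V'] [Module F V'] {Q' : QuadraticForm F V'}

lemma IsometryEquiv.map_orthogonal (Φ : Q.IsometryEquiv Q') (N : Submodule F V) :
    (N.orthogonalBilin Q.polarBilin).map (Φ.toLinearEquiv : V →ₗ[F] V') =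
      (N.map (Φ.toLinearEquiv : V →ₗ[F] V')).orthogonalBilin Q'.polarBilin := by
  ext y
  simp only [Submodule.mem_map, Submodule.mem_orthogonalBilin_iff, LinearEquiv.coe_coe,
    coe_toLinearEquiv, polarBilin_apply_apply, forall_exists_index, and_imp,
    forall_apply_eq_imp_iff₂]
  constructor
  · rintro ⟨x, hx, rfl⟩ n hn
    rw [polar_map_of_isometric Q Φ Φ.map_app]
    exact hx n hn
  · intro hy
    refine ⟨Φ.symm y, fun n hn => ?_, Φ.apply_symm_apply y⟩
    rw [← polar_map_of_isometric Q Φ Φ.map_app, Φ.apply_symm_apply]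
    exact hy n hn

lemma eq_orthogonal_of_sup_eq_top {U W : Submodule F V} (hsup : U ⊔ W = ⊤)
    (horth : ∀ u ∈ U, ∀ w ∈ W, Q.polarBilin u w = 0)
    (hW : ∀ x ∈ W, (∀ y ∈ W, Q.polarBilin x y = 0) → x = 0) :
    U = W.orthogonalBilin Q.polarBilin := by
  refine le_antisymm (fun u hu => Submodule.mem_orthogonalBilin_iff.mpr fun w hw => ?_)
    fun x hx => ?_
  · rw [polarBilin_apply_apply, polar_comm]
    exact horth u hu w hw
  obtain ⟨u, hu, w, hw, rfl⟩ := Submodule.mem_sup.mp (hsup ▸ Submodule.mem_top : x ∈ U ⊔ W)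
  suffices w = 0 by rwa [this, add_zero]
  refine hW w hw fun y hy => ?_
  have hxy : Q.polarBilin (u + w) y = 0 := by
    rw [polarBilin_apply_apply, polar_comm]
    exact Submodule.mem_orthogonalBilin_iff.mp hx y hy
  rwa [map_add, LinearMap.add_apply, horth u hu y hy, zero_add] at hxy

end Orthogonal

end QuadraticMap

open QuadraticMap

theorem equivariant_witt_cancellation_general
    {F G : Type*} [Field F] [Group G]
    (hchar : ringChar F ≠ 2)
    {V₁ V₂ : Type*} [AddCommGroup V₁] [Module F V₁] [FiniteDimensional F V₁]
    [AddCommGroup V₂] [Module F V₂]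
    (Q₁ : QuadraticForm F V₁) (Q₂ : QuadraticForm F V₂)
    (ρ₁ : Representation F G V₁) (ρ₂ : Representation F G V₂)
    (hisom₂ : ∀ (g : G) (v : V₂), Q₂ (ρ₂ g v) = Q₂ v)
    (U₁ W₁ : Submodule F V₁) (U₂ W₂ : Submodule F V₂)
    -- internal direct sum decompositions
    (hsup₁ : U₁ ⊔ W₁ = ⊤)
    (hsup₂ : U₂ ⊔ W₂ = ⊤)
    -- orthogonality of the decompositions
    (horth₁ : ∀ u ∈ U₁, ∀ w ∈ W₁, Q₁.polarBilin u w = 0)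
    (horth₂ : ∀ u ∈ U₂, ∀ w ∈ W₂, Q₂.polarBilin u w = 0)
    -- the subspaces are preserved by G
    (hU₁ : ∀ (g : G), ∀ v ∈ U₁, ρ₁ g v ∈ U₁)
    -- (i) a G-equivariant isometry between V₁ and V₂
    (hVisom : ∃ e : V₁ ≃ₗ[F] V₂,
      (∀ v : V₁, Q₂ (e v) = Q₁ v) ∧ (∀ (g : G) (v : V₁), e (ρ₁ g v) = ρ₂ g (e v)))
    -- (ii) W₁ ⊆ V₁^G and W₂ ⊆ V₂^G
    (hWfix₁ : ∀ w ∈ W₁, ∀ g : G, ρ₁ g w = w)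
    (hWfix₂ : ∀ w ∈ W₂, ∀ g : G, ρ₂ g w = w)
    -- (iii) the restrictions of the forms to W₁ and W₂ are non-degenerate
    (hWnd₁ : ∀ x ∈ W₁, (∀ y ∈ W₁, Q₁.polarBilin x y = 0) → x = 0)
    (hWnd₂ : ∀ x ∈ W₂, (∀ y ∈ W₂, Q₂.polarBilin x y = 0) → x = 0)
    -- (iv) W₁ and W₂ are isometric
    (hWisom : ∃ f : W₁ ≃ₗ[F] W₂, ∀ w : W₁, Q₂ (f w : V₂) = Q₁ (w : V₁)) :
    -- conclusion: U₁ and U₂ are G-equivariantly isometric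
    ∃ φ : U₁ ≃ₗ[F] U₂,
      (∀ u : U₁, Q₂ (φ u : V₂) = Q₁ (u : V₁)) ∧
      (∀ (g : G) (u : U₁), (φ ⟨ρ₁ g (u : V₁), hU₁ g u u.2⟩ : V₂) = ρ₂ g (φ u : V₂)) := by
  obtain ⟨e, he, heρ⟩ := hVisom
  obtain ⟨f, hf⟩ := hWisom
  obtain ⟨Φ, hΦρ, hΦf⟩ := exists_equivariant_isometryEquiv_extend hchar hisom₂ ⟨e, he⟩ heρ
    (T := W₁) hWfix₁ hWnd₁ (W₂.subtype ∘ₗ f) hf fun w => hWfix₂ _ (f w).2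
  have hΦW : W₁.map (Φ.toLinearEquiv : V₁ →ₗ[F] V₂) = W₂ := by
    have hcomp : (Φ.toLinearEquiv : V₁ →ₗ[F] V₂) ∘ₗ W₁.subtype = W₂.subtype ∘ₗ f :=
      LinearMap.ext hΦf
    rw [← Submodule.range_subtype W₁, ← LinearMap.range_comp, hcomp,
      LinearMap.range_comp_of_range_eq_top _ f.range, Submodule.range_subtype]
  have hΦU : U₁.map (Φ.toLinearEquiv : V₁ →ₗ[F] V₂) = U₂ := by
    rw [eq_orthogonal_of_sup_eq_top hsup₁ horth₁ hWnd₁,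
      eq_orthogonal_of_sup_eq_top hsup₂ horth₂ hWnd₂, Φ.map_orthogonal, hΦW]
  exact ⟨(Φ : V₁ ≃ₗ[F] V₂).ofSubmodules U₁ U₂ hΦU, fun u => Φ.map_app u, fun g u => hΦρ g u⟩

/-- **Equivariant Witt cancellation (Theorem A.2).** Let `F` be a field of characteristic `≠ 2`
and `G` a finite group with `|G|` invertible in `F`. Let `V₁, V₂` be finite-dimensional
non-degenerate quadratic spaces over `F` with `G` acting by isometries. Given `G`-stable
orthogonal decompositions `V₁ = U₁ ⊥ W₁` and `V₂ = U₂ ⊥ W₂` such that (i) `V₁` and `V₂` are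
`G`-equivariantly isometric, (ii) `W₁ ⊆ V₁^G`, `W₂ ⊆ V₂^G`, (iii) the forms restricted to
`W₁, W₂` are non-degenerate, and (iv) `W₁` and `W₂` are isometric, then `U₁` and `U₂` are
`G`-equivariantly isometric. -/
theorem equivariant_witt_cancellation
    {F G : Type*} [Field F] [Group G] [Fintype G]
    (hchar : ringChar F ≠ 2)
    (hcard : (Fintype.card G : F) ≠ 0)
    {V₁ V₂ : Type*} [AddCommGroup V₁] [Module F V₁] [FiniteDimensional F V₁]
    [AddCommGroup V₂] [Module F V₂] [FiniteDimensional F V₂]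
    (Q₁ : QuadraticForm F V₁) (Q₂ : QuadraticForm F V₂)
    (hnd₁ : ∀ x : V₁, (∀ y : V₁, Q₁.polarBilin x y = 0) → x = 0)
    (hnd₂ : ∀ x : V₂, (∀ y : V₂, Q₂.polarBilin x y = 0) → x = 0)
    (ρ₁ : Representation F G V₁) (ρ₂ : Representation F G V₂)
    (hisom₁ : ∀ (g : G) (v : V₁), Q₁ (ρ₁ g v) = Q₁ v)
    (hisom₂ : ∀ (g : G) (v : V₂), Q₂ (ρ₂ g v) = Q₂ v)
    (U₁ W₁ : Submodule F V₁) (U₂ W₂ : Submodule F V₂)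
    -- internal direct sum decompositions
    (hinf₁ : U₁ ⊓ W₁ = ⊥) (hsup₁ : U₁ ⊔ W₁ = ⊤)
    (hinf₂ : U₂ ⊓ W₂ = ⊥) (hsup₂ : U₂ ⊔ W₂ = ⊤)
    -- orthogonality of the decompositions
    (horth₁ : ∀ u ∈ U₁, ∀ w ∈ W₁, Q₁.polarBilin u w = 0)
    (horth₂ : ∀ u ∈ U₂, ∀ w ∈ W₂, Q₂.polarBilin u w = 0)
    -- the subspaces are preserved by G
    (hU₁ : ∀ (g : G), ∀ v ∈ U₁, ρ₁ g v ∈ U₁) (hW₁ : ∀ (g : G), ∀ v ∈ W₁, ρ₁ g v ∈ W₁)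
    (hU₂ : ∀ (g : G), ∀ v ∈ U₂, ρ₂ g v ∈ U₂) (hW₂ : ∀ (g : G), ∀ v ∈ W₂, ρ₂ g v ∈ W₂)
    -- (i) a G-equivariant isometry between V₁ and V₂
    (hVisom : ∃ e : V₁ ≃ₗ[F] V₂,
      (∀ v : V₁, Q₂ (e v) = Q₁ v) ∧ (∀ (g : G) (v : V₁), e (ρ₁ g v) = ρ₂ g (e v)))
    -- (ii) W₁ ⊆ V₁^G and W₂ ⊆ V₂^G
    (hWfix₁ : ∀ w ∈ W₁, ∀ g : G, ρ₁ g w = w)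
    (hWfix₂ : ∀ w ∈ W₂, ∀ g : G, ρ₂ g w = w)
    -- (iii) the restrictions of the forms to W₁ and W₂ are non-degenerate
    (hWnd₁ : ∀ x ∈ W₁, (∀ y ∈ W₁, Q₁.polarBilin x y = 0) → x = 0)
    (hWnd₂ : ∀ x ∈ W₂, (∀ y ∈ W₂, Q₂.polarBilin x y = 0) → x = 0)
    -- (iv) W₁ and W₂ are isometric
    (hWisom : ∃ f : W₁ ≃ₗ[F] W₂, ∀ w : W₁, Q₂ (f w : V₂) = Q₁ (w : V₁)) :
    -- conclusion: U₁ and U₂ are G-equivariantly isometric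
    ∃ φ : U₁ ≃ₗ[F] U₂,
      (∀ u : U₁, Q₂ (φ u : V₂) = Q₁ (u : V₁)) ∧
      (∀ (g : G) (u : U₁), (φ ⟨ρ₁ g (u : V₁), hU₁ g u u.2⟩ : V₂) = ρ₂ g (φ u : V₂)) :=
  equivariant_witt_cancellation_general hchar Q₁ Q₂ ρ₁ ρ₂ hisom₂ U₁ W₁ U₂ W₂ hsup₁ hsup₂ horth₁
    horth₂ hU₁ hVisom hWfix₁ hWfix₂ hWnd₁ hWnd₂ hWisom
end

section
/- Let F be a field of characteristic different from 2 and let G be a finite group whose order is invertible in F. Let V₁ and V₂ be finite-dimensional F-vector spaces with non-degenerate quadratic forms, each equipped with an action of G by isometries. Let x₁ ∈ V₁^G and x₂ ∈ V₂^G be G-fixed vectors with ⟨x₁,x₁⟩ = ⟨x₂,x₂⟩ ≠ 0, and set U₁ = (F·x₁)^⊥ ⊆ V₁ and U₂ = (F·x₂)^⊥ ⊆ V₂ (these are G-stable subspaces). If there exists a G-equivariant isometry between V₁ and V₂, then there exists a G-equivariant isometry between U₁ and U₂ (each with the restricted quadratic form and G-action). -/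
/-!
Composing the given isometry `e` with an equivariant isometry `σ` of `V₂` sending `e x₁` to `x₂`
gives an equivariant isometry `V₁ ≃ V₂` carrying `x₁` to `x₂`, hence `x₁^⊥` onto `x₂^⊥`.
For `σ` take Witt's reflection along `y - x` (where `y = e x₁`, `x = x₂`), or, if `y - x` is
isotropic, the reflection along `y + x` followed by the one along `x`: since
`Q (y - x) + Q (y + x) = 4 Q x ≠ 0` one of the two works. All these reflections are along
`G`-fixed vectors, so they commute with the action.
-/

open QuadraticMap

namespace QuadraticMap

variable {F V W : Type*} [Field F] [AddCommGroup V] [Module F V] [AddCommGroup W] [Module F W]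

lemma polar_map_of_isometry {E : Type*} [FunLike E V W] [AddHomClass E V W]
    {Q : QuadraticForm F V} {Q' : QuadraticForm F W} {f : E}
    (hf : ∀ v, Q' (f v) = Q v) (v w : V) : polar Q' (f v) (f w) = polar Q v w := by
  simp only [polar, ← map_add, hf]

variable (Q : QuadraticForm F V)

lemma polarBilin_self (v : V) : Q.polarBilin v v = 2 * Q v := by
  rw [polarBilin_apply_apply, polar_self, two_nsmul, two_mul]

lemma map_sub_add_map_add {x y : V} (hxy : Q x = Q y) : Q (y - x) + Q (y + x) = 4 * Q x := by
  rw [sub_eq_add_neg, QuadraticMap.map_add (⇑Q), QuadraticMap.map_add (⇑Q), Q.map_neg,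
    polar_neg_right, ← hxy]
  ring

noncomputable def orthoReflection (w : V) (hw : Q w ≠ 0) : V ≃ₗ[F] V :=
  Module.reflection (x := w) (f := (Q w)⁻¹ • Q.polarBilin.flip w) <| by
    rw [LinearMap.smul_apply, LinearMap.flip_apply, polarBilin_self, smul_eq_mul,
      mul_comm 2, inv_mul_cancel_left₀ hw]

variable {Q} {w : V} (hw : Q w ≠ 0)

lemma orthoReflection_apply (v : V) :
    Q.orthoReflection w hw v = v - ((Q w)⁻¹ * polar Q v w) • w := by
  simp [orthoReflection, Module.reflection_apply, polarBilin_apply_apply]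

lemma orthoReflection_apply_self : Q.orthoReflection w hw w = -w :=
  Module.reflection_apply_self _

lemma map_orthoReflection (v : V) : Q (Q.orthoReflection w hw v) = Q v := by
  rw [orthoReflection_apply, sub_eq_add_neg, QuadraticMap.map_add (⇑Q), Q.map_neg, Q.map_smul,
    polar_neg_right, polar_smul_right, smul_eq_mul, smul_eq_mul]
  field_simp
  ring

lemma orthoReflection_commute {T : V →ₗ[F] V} (hT : ∀ v, Q (T v) = Q v) (hTw : T w = w)
    (v : V) : Q.orthoReflection w hw (T v) = T (Q.orthoReflection w hw v) := by
  have hpolar : polar Q (T v) w = polar Q v w := by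
    rw [← polar_map_of_isometry hT v w, hTw]
  rw [orthoReflection_apply, orthoReflection_apply, hpolar, map_sub, map_smul, hTw]

lemma orthoReflection_sub_apply_left {x y : V} (hxy : Q x = Q y) (h : Q (y - x) ≠ 0) :
    Q.orthoReflection (y - x) h y = x := by
  have hpolar : polar Q y (y - x) = Q (y - x) := by
    rw [polar_sub_right, polar_self, sub_eq_add_neg y x, QuadraticMap.map_add (⇑Q), Q.map_neg,
      polar_neg_right, hxy, two_nsmul]
    ring
  rw [orthoReflection_apply, hpolar, inv_mul_cancel₀ h, one_smul, sub_sub_cancel]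

lemma orthoReflection_add_apply_left {x y : V} (hxy : Q x = Q y) (h : Q (y + x) ≠ 0) :
    Q.orthoReflection (y + x) h y = -x := by
  have hpolar : polar Q y (y + x) = Q (y + x) := by
    rw [polar_add_right, polar_self, QuadraticMap.map_add (⇑Q), hxy, two_nsmul]
  rw [orthoReflection_apply, hpolar, inv_mul_cancel₀ h, one_smul, sub_add_cancel_left]

theorem exists_isometry_apply_eq (h2 : (2 : F) ≠ 0) {x y : V} (hx : Q x ≠ 0) (hxy : Q x = Q y) :
    ∃ σ : V ≃ₗ[F] V, (∀ v, Q (σ v) = Q v) ∧ σ y = x ∧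
      ∀ T : V →ₗ[F] V, (∀ v, Q (T v) = Q v) → T x = x → T y = y →
        ∀ v, σ (T v) = T (σ v) := by
  by_cases hsub : Q (y - x) = 0
  · have hadd : Q (y + x) ≠ 0 := by
      have h4 : (4 : F) * Q x ≠ 0 := by
        rw [show (4 : F) = 2 * 2 by norm_num]
        exact mul_ne_zero (mul_ne_zero h2 h2) hx
      rw [← map_sub_add_map_add Q hxy, hsub, zero_add] at h4
      exact h4
    refine ⟨(Q.orthoReflection (y + x) hadd).trans (Q.orthoReflection x hx), fun v => ?_, ?_,
      fun T hT hTx hTy v => ?_⟩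
    · simp only [LinearEquiv.trans_apply, map_orthoReflection]
    · rw [LinearEquiv.trans_apply, orthoReflection_add_apply_left hxy, map_neg,
        orthoReflection_apply_self, neg_neg]
    · have hTyx : T (y + x) = y + x := by rw [map_add, hTx, hTy]
      simp only [LinearEquiv.trans_apply, orthoReflection_commute _ hT hTyx,
        orthoReflection_commute _ hT hTx]
  · refine ⟨Q.orthoReflection (y - x) hsub, map_orthoReflection hsub,
      orthoReflection_sub_apply_left hxy hsub, fun T hT hTx hTy => ?_⟩
    exact orthoReflection_commute hsub hT (by rw [map_sub, hTx, hTy])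

end QuadraticMap

lemma mem_iff_polar_eq_zero_of_forall_span {F V : Type*} [Field F] [AddCommGroup V]
    [Module F V] {Q : QuadraticForm F V} {x : V} {U : Submodule F V}
    (hU : ∀ v : V, v ∈ U ↔ ∀ w ∈ Submodule.span F {x}, Q.polarBilin v w = 0) (v : V) :
    v ∈ U ↔ polar Q v x = 0 := by
  simp only [hU, Submodule.mem_span_singleton, forall_exists_index, forall_apply_eq_imp_iff,
    polarBilin_apply_apply, polar_smul_right, smul_eq_mul, mul_eq_zero]
  exact ⟨fun h => (h 1).resolve_left one_ne_zero, fun h _ => Or.inr h⟩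

lemma map_eq_of_isometry_apply_eq {F V₁ V₂ : Type*} [Field F] [AddCommGroup V₁]
    [Module F V₁] [AddCommGroup V₂] [Module F V₂] {Q₁ : QuadraticForm F V₁}
    {Q₂ : QuadraticForm F V₂} {x₁ : V₁} {x₂ : V₂} {U₁ : Submodule F V₁} {U₂ : Submodule F V₂}
    (hU₁ : ∀ v : V₁, v ∈ U₁ ↔ ∀ w ∈ Submodule.span F {x₁}, Q₁.polarBilin v w = 0)
    (hU₂ : ∀ v : V₂, v ∈ U₂ ↔ ∀ w ∈ Submodule.span F {x₂}, Q₂.polarBilin v w = 0)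
    (f : V₁ ≃ₗ[F] V₂) (hf : ∀ v, Q₂ (f v) = Q₁ v) (hfx : f x₁ = x₂) :
    U₁.map (f : V₁ →ₗ[F] V₂) = U₂ := by
  have hmem : ∀ v, f v ∈ U₂ ↔ v ∈ U₁ := fun v => by
    rw [mem_iff_polar_eq_zero_of_forall_span hU₁, mem_iff_polar_eq_zero_of_forall_span hU₂,
      ← hfx, polar_map_of_isometry hf]
  ext z
  rw [Submodule.map_equiv_eq_comap_symm, Submodule.mem_comap, LinearEquiv.coe_coe,
    ← hmem, LinearEquiv.apply_symm_apply]

theorem equivariant_witt_cancellation_rank_one_general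
    {F G : Type*} [Field F] [Group G]
    (hchar : ringChar F ≠ 2)
    {V₁ V₂ : Type*} [AddCommGroup V₁] [Module F V₁]
    [AddCommGroup V₂] [Module F V₂]
    (Q₁ : QuadraticForm F V₁) (Q₂ : QuadraticForm F V₂)
    (ρ₁ : Representation F G V₁) (ρ₂ : Representation F G V₂)
    (hisom₂ : ∀ (g : G) (v : V₂), Q₂ (ρ₂ g v) = Q₂ v)
    (x₁ : V₁) (x₂ : V₂)
    (hx₁ : ∀ g : G, ρ₁ g x₁ = x₁) (hx₂ : ∀ g : G, ρ₂ g x₂ = x₂)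
    (hxx : Q₁.polarBilin x₁ x₁ = Q₂.polarBilin x₂ x₂)
    (hne : Q₁.polarBilin x₁ x₁ ≠ 0)
    -- U₁ = (F·x₁)^⊥ and U₂ = (F·x₂)^⊥
    (U₁ : Submodule F V₁) (U₂ : Submodule F V₂)
    (hU₁ : ∀ v : V₁, v ∈ U₁ ↔ ∀ w ∈ Submodule.span F {x₁}, Q₁.polarBilin v w = 0)
    (hU₂ : ∀ v : V₂, v ∈ U₂ ↔ ∀ w ∈ Submodule.span F {x₂}, Q₂.polarBilin v w = 0)
    -- a G-equivariant isometry between V₁ and V₂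
    (hVisom : ∃ e : V₁ ≃ₗ[F] V₂,
      (∀ v : V₁, Q₂ (e v) = Q₁ v) ∧ (∀ (g : G) (v : V₁), e (ρ₁ g v) = ρ₂ g (e v))) :
    -- conclusion: U₁ and U₂ are G-equivariantly isometric
    ∃ φ : U₁ ≃ₗ[F] U₂,
      (∀ u : U₁, Q₂ (φ u : V₂) = Q₁ (u : V₁)) ∧
      (∀ (g : G) (u : U₁) (hu : ρ₁ g (u : V₁) ∈ U₁),
        (φ ⟨ρ₁ g (u : V₁), hu⟩ : V₂) = ρ₂ g (φ u : V₂)) := by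
  obtain ⟨e, he, heρ⟩ := hVisom
  have h2 : (2 : F) ≠ 0 := Ring.two_ne_zero hchar
  rw [polarBilin_self, polarBilin_self] at hxx
  rw [polarBilin_self] at hne
  have hQ : Q₂ x₂ = Q₂ (e x₁) := by rw [he, mul_left_cancel₀ h2 hxx]
  have hx₂0 : Q₂ x₂ ≠ 0 := by rw [hQ, he]; exact right_ne_zero_of_mul hne
  obtain ⟨σ, hσ, hσx, hσρ⟩ := exists_isometry_apply_eq h2 hx₂0 hQ
  let f := e.trans σ
  have hf : ∀ v, Q₂ (f v) = Q₁ v := fun v => (hσ _).trans (he v)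
  have hfρ : ∀ g v, f (ρ₁ g v) = ρ₂ g (f v) := fun g v => by
    simp only [f, LinearEquiv.trans_apply, heρ]
    exact hσρ (ρ₂ g) (hisom₂ g) (hx₂ g) (by rw [← heρ, hx₁]) (e v)
  refine ⟨f.ofSubmodules U₁ U₂ (map_eq_of_isometry_apply_eq hU₁ hU₂ f hf hσx),
    fun u => hf u, fun g u _ => hfρ g u⟩

/-- **Equivariant Witt cancellation, rank-one case.** Let `F` be a field of characteristic `≠ 2`
and `G` a finite group with `|G|` invertible in `F`. Let `V₁, V₂` be finite-dimensional
non-degenerate quadratic spaces over `F` with `G` acting by isometries. Let `x₁ ∈ V₁^G` and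
`x₂ ∈ V₂^G` be `G`-fixed vectors with `⟨x₁,x₁⟩ = ⟨x₂,x₂⟩ ≠ 0` and let `U₁ = (F·x₁)^⊥`,
`U₂ = (F·x₂)^⊥`. If `V₁` and `V₂` are `G`-equivariantly isometric, then so are `U₁` and `U₂`. -/
theorem equivariant_witt_cancellation_rank_one
    {F G : Type*} [Field F] [Group G] [Fintype G]
    (hchar : ringChar F ≠ 2)
    (hcard : (Fintype.card G : F) ≠ 0)
    {V₁ V₂ : Type*} [AddCommGroup V₁] [Module F V₁] [FiniteDimensional F V₁]
    [AddCommGroup V₂] [Module F V₂] [FiniteDimensional F V₂]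
    (Q₁ : QuadraticForm F V₁) (Q₂ : QuadraticForm F V₂)
    (hnd₁ : ∀ x : V₁, (∀ y : V₁, Q₁.polarBilin x y = 0) → x = 0)
    (hnd₂ : ∀ x : V₂, (∀ y : V₂, Q₂.polarBilin x y = 0) → x = 0)
    (ρ₁ : Representation F G V₁) (ρ₂ : Representation F G V₂)
    (hisom₁ : ∀ (g : G) (v : V₁), Q₁ (ρ₁ g v) = Q₁ v)
    (hisom₂ : ∀ (g : G) (v : V₂), Q₂ (ρ₂ g v) = Q₂ v)
    (x₁ : V₁) (x₂ : V₂)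
    (hx₁ : ∀ g : G, ρ₁ g x₁ = x₁) (hx₂ : ∀ g : G, ρ₂ g x₂ = x₂)
    (hxx : Q₁.polarBilin x₁ x₁ = Q₂.polarBilin x₂ x₂)
    (hne : Q₁.polarBilin x₁ x₁ ≠ 0)
    -- U₁ = (F·x₁)^⊥ and U₂ = (F·x₂)^⊥
    (U₁ : Submodule F V₁) (U₂ : Submodule F V₂)
    (hU₁ : ∀ v : V₁, v ∈ U₁ ↔ ∀ w ∈ Submodule.span F {x₁}, Q₁.polarBilin v w = 0)
    (hU₂ : ∀ v : V₂, v ∈ U₂ ↔ ∀ w ∈ Submodule.span F {x₂}, Q₂.polarBilin v w = 0)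
    -- a G-equivariant isometry between V₁ and V₂
    (hVisom : ∃ e : V₁ ≃ₗ[F] V₂,
      (∀ v : V₁, Q₂ (e v) = Q₁ v) ∧ (∀ (g : G) (v : V₁), e (ρ₁ g v) = ρ₂ g (e v))) :
    -- conclusion: U₁ and U₂ are G-equivariantly isometric
    ∃ φ : U₁ ≃ₗ[F] U₂,
      (∀ u : U₁, Q₂ (φ u : V₂) = Q₁ (u : V₁)) ∧
      (∀ (g : G) (u : U₁) (hu : ρ₁ g (u : V₁) ∈ U₁),
        (φ ⟨ρ₁ g (u : V₁), hu⟩ : V₂) = ρ₂ g (φ u : V₂)) :=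
  equivariant_witt_cancellation_rank_one_general hchar Q₁ Q₂ ρ₁ ρ₂ hisom₂ x₁ x₂ hx₁ hx₂ hxx hne U₁
    U₂ hU₁ hU₂ hVisom
end

section
/- (Weight argument.) Let C be a preadditive category with finite biproducts. For r = 0, 1, …, n, let I_r be a finite index set, let N_{r,i} (for i ∈ I_r) be objects of C each assigned an integer weight w(r,i), and let M_r = ⊕_{i ∈ I_r} N_{r,i} be the biproduct. Assume that for all indices, every morphism N_{r,i} → N_{s,j} in C is zero whenever w(r,i) < w(s,j). Fix an integer k and assume that w(0,i) = k for all i ∈ I_0 and w(n,j) = k for all j ∈ I_n. For each r, let M_r^{w=k} = ⊕_{i ∈ I_r, w(r,i) = k} N_{r,i}, and let ι_r : M_r^{w=k} → M_r and π_r : M_r → M_r^{w=k} denote the canonical biproduct inclusion and projection. Then for any morphisms f_r : M_r → M_{r+1} (r = 0, …, n−1), the composition f_{n−1} ∘ ⋯ ∘ f_1 ∘ f_0 : M_0 → M_n is equal to the composition (f_{n−1} ∘ ι_{n−1}) ∘ (π_{n−1} ∘ f_{n−2} ∘ ι_{n−2}) ∘ ⋯ ∘ (π_2 ∘ f_1 ∘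 ι_1) ∘ (π_1 ∘ f_0), i.e., the composition obtained by inserting the idempotent ι_r ∘ π_r : M_r → M_r at each intermediate stage 1 ≤ r ≤ n−1. -/
open CategoryTheory CategoryTheory.Limits

/-- The composition `f_{n-1} ∘ ⋯ ∘ f_1 ∘ f_0 : M 0 ⟶ M n` of a chain of morphisms
`f r : M r ⟶ M (r+1)`. -/
noncomputable def chainComp {C : Type*} [Category C] (M : ℕ → C)
    (f : ∀ r : ℕ, M r ⟶ M (r + 1)) : ∀ n : ℕ, (M 0 ⟶ M n)
  | 0 => 𝟙 (M 0)
  | n + 1 => chainComp M f n ≫ f n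

/-- **Weight argument.** In a preadditive category with finite biproducts, suppose each `M r`
is a finite biproduct `⨁ i, N r i` of objects with integer weights `w r i`, such that every
morphism from a summand of strictly smaller weight to a summand of strictly larger weight is
zero. If all summands of `M 0` and of `M n` have weight `k`, then any composite
`M 0 ⟶ M 1 ⟶ ⋯ ⟶ M n` equals the composite obtained by inserting at every intermediate stage
`1 ≤ r ≤ n - 1` the idempotent `M r ⟶ M r^{w=k} ⟶ M r` given by the biproduct projection onto,
followed by the inclusion of, the summands of weight `k`. -/
theorem weight_argument {C : Type*} [Category C] [Preadditive C] [HasFiniteBiproducts C]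
    (n : ℕ) (I : ℕ → Type) [∀ r, Fintype (I r)]
    (N : ∀ r : ℕ, I r → C) (w : ∀ r : ℕ, I r → ℤ) (k : ℤ)
    (hzero : ∀ (r s : ℕ) (i : I r) (j : I s), w r i < w s j → ∀ φ : N r i ⟶ N s j, φ = 0)
    (h0 : ∀ i : I 0, w 0 i = k)
    (hn : ∀ j : I n, w n j = k)
    (f : ∀ r : ℕ, (⨁ N r) ⟶ (⨁ N (r + 1))) :
    chainComp (fun r => ⨁ N r) f n =
      chainComp (fun r => ⨁ N r)
        (fun r =>
          match r with
          | 0 => f 0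
          | r + 1 =>
              (biproduct.toSubtype (N (r + 1)) (fun i => w (r + 1) i = k) ≫
                biproduct.fromSubtype (N (r + 1)) (fun i => w (r + 1) i = k)) ≫ f (r + 1)) n := by
  classical
  -- the weight-`k` idempotent at each stage
  set E : ∀ r : ℕ, (⨁ N r) ⟶ (⨁ N r) := fun r =>
    biproduct.toSubtype (N r) (fun i => w r i = k) ≫
      biproduct.fromSubtype (N r) (fun i => w r i = k) with hEdef
  have hE : ∀ r : ℕ, E r = biproduct.map (fun j => if w r j = k then 𝟙 (N r j) else 0) := by
    intro r
    simp [hEdef, biproduct.toSubtype_fromSubtype]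
  -- morphisms from `⨁ N 0` into a summand of weight `> k` vanish
  have haveA : ∀ (r : ℕ) (j : I r), k < w r j → ∀ g : (⨁ N 0) ⟶ N r j, g = 0 := by
    intro r j hj g
    have h1 : (𝟙 (⨁ N 0)) ≫ g = g := Category.id_comp g
    rw [← h1, ← biproduct.total, Preadditive.sum_comp]
    apply Finset.sum_eq_zero
    intro i _
    rw [Category.assoc,
      hzero 0 r i j (by rw [h0 i]; exact hj) (biproduct.ι (N 0) i ≫ g), comp_zero]
  -- inserting the idempotent before `f m` changes nothing, after composing with `E (m+1)`
  have hins : ∀ (m : ℕ) (g : (⨁ N 0) ⟶ (⨁ N m)),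
      g ≫ E m ≫ f m ≫ E (m + 1) = g ≫ f m ≫ E (m + 1) := by
    intro m g
    have hX : ∀ j : I m, w m j < k →
        biproduct.ι (N m) j ≫ f m ≫ E (m + 1) = 0 := by
      intro j hj
      rw [hE (m + 1)]
      apply biproduct.hom_ext
      intro j'
      simp only [Category.assoc, biproduct.map_π, zero_comp]
      by_cases hj' : w (m + 1) j' = k
      · have h3 := hzero m (m + 1) j j' (by rw [hj']; exact hj)
          (biproduct.ι (N m) j ≫ f m ≫ biproduct.π (N (m + 1)) j')
        simp only [if_pos hj', Category.comp_id, Category.assoc, h3]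
      · simp only [if_neg hj', comp_zero]
    calc g ≫ E m ≫ f m ≫ E (m + 1)
        = g ≫ (𝟙 (⨁ N m)) ≫ E m ≫ f m ≫ E (m + 1) := by rw [Category.id_comp]
      _ = ∑ j : I m, g ≫ (biproduct.π (N m) j ≫ biproduct.ι (N m) j) ≫ E m ≫ f m ≫ E (m + 1) := by
          rw [← biproduct.total, Preadditive.sum_comp, Preadditive.comp_sum]
      _ = ∑ j : I m, g ≫ (biproduct.π (N m) j ≫ biproduct.ι (N m) j) ≫ f m ≫ E (m + 1) := by
          apply Finset.sum_congr rfl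
          intro j _
          by_cases hj : w m j = k
      -- case `w m j = k`: `ι j ≫ E m = ι j`
          · have : biproduct.ι (N m) j ≫ E m = biproduct.ι (N m) j := by
              rw [hE m, biproduct.ι_map, if_pos hj, Category.id_comp]
            simp only [Category.assoc] at this ⊢
            rw [reassoc_of% this]
          · rcases lt_or_gt_of_ne (fun h => hj h) with hlt | hgt
            · -- `w m j < k`: the right factor dies
              have h2 := hX j hlt
              simp only [Category.assoc] at h2 ⊢
              rw [h2, comp_zero, comp_zero]
              have : biproduct.ι (N m) j ≫ E m ≫ f m ≫ E (m + 1) = 0 := by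
                rw [hE m, biproduct.ι_map_assoc, if_neg hj, zero_comp]
              rw [this, comp_zero, comp_zero]
            · -- `k < w m j`: the left factor dies
              have h2 : g ≫ biproduct.π (N m) j = 0 :=
                haveA m j hgt (g ≫ biproduct.π (N m) j)
              simp only [Category.assoc]
              rw [reassoc_of% h2, reassoc_of% h2, zero_comp, zero_comp]
      _ = g ≫ (𝟙 (⨁ N m)) ≫ f m ≫ E (m + 1) := by
          rw [← biproduct.total, Preadditive.sum_comp, Preadditive.comp_sum]
      _ = g ≫ f m ≫ E (m + 1) := by rw [Category.id_comp]
  -- main induction: the two chains agree after composing with `E m`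
  have key : ∀ m : ℕ,
      chainComp (fun r => ⨁ N r) f m ≫ E m =
      chainComp (fun r => ⨁ N r)
        (fun r =>
          match r with
          | 0 => f 0
          | r + 1 => E (r + 1) ≫ f (r + 1)) m ≫ E m := by
    intro m
    induction m with
    | zero => rfl
    | succ m ih =>
      match m with
      | 0 => rfl
      | t + 1 =>
        show (chainComp (fun r => ⨁ N r) f (t + 1) ≫ f (t + 1)) ≫ E (t + 2) =
          (chainComp (fun r => ⨁ N r) _ (t + 1) ≫ (E (t + 1) ≫ f (t + 1))) ≫ E (t + 2)
        simp only [Category.assoc]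
        conv_lhs => rw [← hins (t + 1) (chainComp (fun r => ⨁ N r) f (t + 1))]
        rw [← Category.assoc, ← Category.assoc, ih]
        simp only [Category.assoc]
  -- at stage `n`, all weights are `k`, so `E n = 𝟙`
  have hEn : E n = 𝟙 (⨁ N n) := by
    rw [hE n]
    have : (fun j => if w n j = k then 𝟙 (N n j) else 0) = fun j => 𝟙 (N n j) := by
      funext j
      rw [if_pos (hn j)]
    rw [this]
    apply biproduct.hom_ext
    intro j
    simp
  have := key n
  rw [hEn, Category.comp_id, Category.comp_id] at this
  exact this
end
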